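/- If (P*, C*) is a partial optimal solution of the relaxed K-means problem (f(P*, C*) ≤ f(P, C*) for all P ∈ S_2, with C* optimal for P*), all clusters of P* are non-empty, and the set A(C*) of minimizing 0/1 assignments for centers C* is a singleton, then P* is a local minimizer of F on S_2 (C-local). -/

import Mathlib

/-!
Write `P* = [σ]` for a hard assignment `σ` and `C_P` for the weighted centers of `P`.
Uniqueness of the hard minimizer for `C*` means every point is *strictly* closer to its own
center than to any other one: otherwise moving it would give a second minimizer. The derivative of
a differentiable convex function is continuous on the interior, so `D(x, ·)` is continuous there,
and together with the continuity of `P ↦ C_P` the strict inequalities persist: for `P` near `P*`,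
`σ` is still a nearest-center assignment for `C_P`. For such `P ∈ S₂`,
`F(P*) ≤ f(P*, C_P) ≤ f(P, C_P) ≤ F(P)`, the last step because the weighted mean minimizes the
weighted Bregman divergence to a point.
-/

open Finset Filter Topology

section Convex

variable {E : Type*} [NormedAddCommGroup E] [NormedSpace ℝ E]

theorem ConvexOn.le_sub_of_hasFDerivAt {s : Set E} {φ : E → ℝ} {L : E →L[ℝ] ℝ} {a z : E}
    (hφ : ConvexOn ℝ s φ) (ha : a ∈ s) (hz : z ∈ s) (hL : HasFDerivAt φ L a) :
    L (z - a) ≤ φ z - φ a := by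
  have hline : HasDerivAt (φ ∘ AffineMap.lineMap a z) (L (z - a)) (0:ℝ) := by
    refine HasFDerivAt.comp_hasDerivAt _ ?_ AffineMap.hasDerivAt_lineMap
    rwa [AffineMap.lineMap_apply_zero]
  simpa [slope] using (hφ.comp_affineMap (AffineMap.lineMap a z)).le_slope_of_hasDerivAt
    (by simpa) (by simpa) zero_lt_one hline

theorem ConvexOn.eventually_fderiv_apply_lt {s : Set E} {φ : E → ℝ} (hφ : ConvexOn ℝ s φ)
    (hd : DifferentiableOn ℝ φ (interior s)) {b : E} (hb : b ∈ interior s) (v : E) {c : ℝ}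
    (hc : fderiv ℝ φ b v < c) : ∀ᶠ y in 𝓝 b, fderiv ℝ φ y v < c := by
  have hdiffAt : ∀ y ∈ interior s, DifferentiableAt ℝ φ y :=
    fun y hy => hd.differentiableAt (isOpen_interior.mem_nhds hy)
  have hslope : ∀ᶠ t in 𝓝[>] (0:ℝ), t⁻¹ * (φ (b + t • v) - φ b) < c :=
    ((hdiffAt b hb).hasFDerivAt.hasLineDerivAt v).tendsto_slope_zero_right.eventually
      (gt_mem_nhds hc)
  have hinterior : ∀ᶠ t in 𝓝 (0:ℝ), b + t • v ∈ interior s :=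
    ((continuous_const.add (continuous_id.smul continuous_const)).tendsto' (0:ℝ) b
      (by simp)).eventually (isOpen_interior.mem_nhds hb)
  obtain ⟨t, ⟨hlt, hmem⟩, ht⟩ :=
    ((hslope.and (nhdsWithin_le_nhds hinterior)).and self_mem_nhdsWithin).exists
  have hcont : ContinuousAt (fun y => t⁻¹ * (φ (y + t • v) - φ y)) b :=
    continuousAt_const.mul ((ContinuousAt.comp (f := fun y => y + t • v)
      (hdiffAt _ hmem).continuousAt (continuous_add_const (t • v)).continuousAt).sub
      (hdiffAt b hb).continuousAt)
  filter_upwards [isOpen_interior.mem_nhds hb,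
    (continuous_add_const (t • v)).continuousAt.preimage_mem_nhds (isOpen_interior.mem_nhds hmem),
    hcont.eventually_lt continuousAt_const hlt] with y hy hyt hslope_y
  have hgrad := hφ.le_sub_of_hasFDerivAt (interior_subset hy) (interior_subset hyt)
    (hdiffAt y hy).hasFDerivAt
  rw [add_sub_cancel_left, map_smul, smul_eq_mul] at hgrad
  have ht : (0:ℝ) < t := ht
  calc fderiv ℝ φ y v = t⁻¹ * (t * fderiv ℝ φ y v) := by field_simp
    _ ≤ t⁻¹ * (φ (y + t • v) - φ y) := by gcongr
    _ < c := hslope_y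

theorem ConvexOn.continuousOn_fderiv [FiniteDimensional ℝ E] {s : Set E} {φ : E → ℝ}
    (hφ : ConvexOn ℝ s φ) (hd : DifferentiableOn ℝ φ (interior s)) :
    ContinuousOn (fderiv ℝ φ) (interior s) := by
  refine fun b hb => (continuousAt_clm_apply.2 fun v => ?_).continuousWithinAt
  refine tendsto_order.2 ⟨fun c hc => ?_, fun c hc => hφ.eventually_fderiv_apply_lt hd hb v hc⟩
  simpa using hφ.eventually_fderiv_apply_lt hd hb (-v) (c := -c) (by simpa using hc)

noncomputable def bregmanDiv (φ : E → ℝ) (φ' : E → E →L[ℝ] ℝ) (x y : E) : ℝ :=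
  φ x - φ y - φ' y (x - y)

section Bregman

variable {s : Set E} {φ : E → ℝ} {φ' : E → E →L[ℝ] ℝ}

theorem bregmanDiv_nonneg (hφ : ConvexOn ℝ s φ) {x y : E} (hx : x ∈ s) (hy : y ∈ s)
    (hφ' : HasFDerivAt φ (φ' y) y) : 0 ≤ bregmanDiv φ φ' x y :=
  sub_nonneg.2 (hφ.le_sub_of_hasFDerivAt hy hx hφ')

theorem ConvexOn.continuousAt_bregmanDiv [FiniteDimensional ℝ E] (hφ : ConvexOn ℝ s φ)
    (hφ' : ∀ y ∈ interior s, HasFDerivAt φ (φ' y) y) (x : E) {c : E} (hc : c ∈ interior s) :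
    ContinuousAt (bregmanDiv φ φ' x) c := by
  have hφ'_eq : φ' =ᶠ[𝓝 c] fderiv ℝ φ :=
    eventually_of_mem (isOpen_interior.mem_nhds hc) fun y hy => (hφ' y hy).fderiv.symm
  have hφ'_cont : ContinuousAt φ' c :=
    ((hφ.continuousOn_fderiv fun y hy => (hφ' y hy).differentiableAt.differentiableWithinAt)
      |>.continuousAt (isOpen_interior.mem_nhds hc)).congr hφ'_eq.symm
  exact (continuousAt_const.sub (hφ' c hc).continuousAt).sub
    (hφ'_cont.clm_apply (continuousAt_const.sub continuousAt_id))

/-- Bregman analogue of the parallel axis theorem. -/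
theorem sum_mul_bregmanDiv_centerMass {ι : Type*} (t : Finset ι) (a : ι → ℝ) (x : ι → E)
    (ha : ∑ i ∈ t, a i ≠ 0) (c : E) :
    ∑ i ∈ t, a i * bregmanDiv φ φ' (x i) c =
      ∑ i ∈ t, a i * bregmanDiv φ φ' (x i) (t.centerMass a x) +
        (∑ i ∈ t, a i) * bregmanDiv φ φ' (t.centerMass a x) c := by
  set m := t.centerMass a x
  have hm : ∑ i ∈ t, a i • x i = (∑ i ∈ t, a i) • m := (smul_inv_smul₀ ha _).symm
  have key : ∀ y, ∑ i ∈ t, a i * bregmanDiv φ φ' (x i) y =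
      ∑ i ∈ t, a i * φ (x i) - (∑ i ∈ t, a i) * φ y - φ' y ((∑ i ∈ t, a i) • (m - y)) := by
    intro y
    have hlin : ∑ i ∈ t, a i * φ' y (x i - y) = φ' y ((∑ i ∈ t, a i) • (m - y)) := by
      rw [smul_sub, ← hm, sum_smul, ← sum_sub_distrib, map_sum]
      exact sum_congr rfl fun i _ => by rw [← smul_sub, map_smul, smul_eq_mul]
    simp only [bregmanDiv, mul_sub, sum_sub_distrib, ← sum_mul, hlin]
  rw [key, key, sub_self, smul_zero, map_zero]
  simp only [bregmanDiv, map_smul, smul_eq_mul]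
  ring

end Bregman

end Convex

section Assignments

variable {κ ι : Type*} [Fintype κ]

def relaxedAssignments : Set (κ → ι → ℝ) :=
  {P | (∀ n, ∑ k, P k n = 1) ∧ ∀ k n, 0 ≤ P k n}

def hardAssignments : Set (κ → ι → ℝ) :=
  {P ∈ relaxedAssignments | ∀ k n, P k n = 0 ∨ P k n = 1}

variable [DecidableEq κ]

def assignmentMatrix (σ : ι → κ) : κ → ι → ℝ :=
  fun k n => if σ n = k then 1 else 0

theorem assignmentMatrix_mem_hardAssignments (σ : ι → κ) :
    assignmentMatrix σ ∈ hardAssignments := by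
  refine ⟨⟨fun n => by simp [assignmentMatrix], fun k n => ?_⟩, fun k n => ?_⟩ <;>
    unfold assignmentMatrix <;> split_ifs <;> norm_num

theorem exists_eq_assignmentMatrix {P : κ → ι → ℝ} (hP : P ∈ hardAssignments) :
    ∃ σ : ι → κ, P = assignmentMatrix σ := by
  obtain ⟨⟨hsum, hnonneg⟩, h01⟩ := hP
  have hex : ∀ n, ∃ k, P k n = 1 := by
    intro n
    by_contra! h
    have := hsum n
    rw [sum_eq_zero fun k _ => (h01 k n).resolve_right (h k)] at this
    exact zero_ne_one this
  choose σ hσ using hex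
  refine ⟨σ, funext₂ fun k n => ?_⟩
  unfold assignmentMatrix
  split_ifs with hk
  · exact hk ▸ hσ n
  · refine (h01 k n).resolve_right fun h1 => ?_
    have := add_le_sum (fun k _ => hnonneg k n) (mem_univ k) (mem_univ (σ n)) (Ne.symm hk)
    rw [h1, hσ n, hsum n] at this
    norm_num at this

end Assignments

section WeightedCenter

variable {E κ ι : Type*} [Fintype ι] {w : ι → ℝ}

noncomputable def weightedCenter [AddCommGroup E] [Module ℝ E] (w : ι → ℝ) (x : ι → E)
    (P : κ → ι → ℝ) (k : κ) : E :=
  univ.centerMass (fun n => P k n * w n) x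

theorem weightedCenter_mem [AddCommGroup E] [Module ℝ E] {x : ι → E} {t : Set E}
    (ht : Convex ℝ t) (hx : ∀ n, x n ∈ t) {P : κ → ι → ℝ} {k : κ} (hP : ∀ n, 0 ≤ P k n)
    (hw : ∀ n, 0 ≤ w n) (hpos : 0 < ∑ n, P k n * w n) : weightedCenter w x P k ∈ t :=
  ht.centerMass_mem (fun n _ => mul_nonneg (hP n) (hw n)) hpos fun n _ => hx n

theorem continuousAt_weightedCenter [NormedAddCommGroup E] [NormedSpace ℝ E] {x : ι → E}
    {P₀ : κ → ι → ℝ} {k : κ} (hpos : ∑ n, P₀ k n * w n ≠ 0) :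
    ContinuousAt (fun P => weightedCenter w x P k) P₀ := by
  have hden : Continuous fun P : κ → ι → ℝ => ∑ n, P k n * w n := by fun_prop
  have hnum : Continuous fun P : κ → ι → ℝ => ∑ n, (P k n * w n) • x n := by fun_prop
  exact (hden.continuousAt.inv₀ hpos).smul hnum.continuousAt

end WeightedCenter

section Cost

variable {E κ ι : Type*} [Fintype κ] [Fintype ι]

def kmeansCost (w : ι → ℝ) (D : E → E → ℝ) (x : ι → E) (P : κ → ι → ℝ) (C : κ → E) : ℝ :=
  ∑ k, ∑ n, P k n * w n * D (x n) (C k)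

def hardMinimizers (w : ι → ℝ) (D : E → E → ℝ) (x : ι → E) (C : κ → E) : Set (κ → ι → ℝ) :=
  {Q ∈ hardAssignments | ∀ Q' ∈ hardAssignments, kmeansCost w D x Q C ≤ kmeansCost w D x Q' C}

section HardAssignments

variable [DecidableEq κ] {w : ι → ℝ} {D : E → E → ℝ} {x : ι → E} {C : κ → E}

theorem kmeansCost_assignmentMatrix (σ : ι → κ) :
    kmeansCost w D x (assignmentMatrix σ) C = ∑ n, w n * D (x n) (C (σ n)) := by
  rw [kmeansCost, sum_comm]
  simp [assignmentMatrix, ite_mul]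

theorem kmeansCost_assignmentMatrix_le {σ : ι → κ} {P : κ → ι → ℝ} (hP : P ∈ relaxedAssignments)
    (hw : ∀ n, 0 ≤ w n) (hσ : ∀ n k, D (x n) (C (σ n)) ≤ D (x n) (C k)) :
    kmeansCost w D x (assignmentMatrix σ) C ≤ kmeansCost w D x P C := by
  rw [kmeansCost_assignmentMatrix, kmeansCost, sum_comm]
  refine sum_le_sum fun n _ => ?_
  calc w n * D (x n) (C (σ n)) = ∑ k, P k n * w n * D (x n) (C (σ n)) := by
        rw [← sum_mul, ← sum_mul, hP.1 n, one_mul]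
    _ ≤ ∑ k, P k n * w n * D (x n) (C k) :=
        sum_le_sum fun k _ => mul_le_mul_of_nonneg_left (hσ n k) (mul_nonneg (hP.2 k n) (hw n))

/-- Moving the point `n` to cluster `k` gives a second hard assignment, which by uniqueness costs
strictly more. -/
theorem lt_of_hardMinimizers_eq_singleton {σ : ι → κ}
    (h : hardMinimizers w D x C = {assignmentMatrix σ}) (hw : ∀ n, 0 < w n) {n : ι} {k : κ}
    (hk : k ≠ σ n) : D (x n) (C (σ n)) < D (x n) (C k) := by
  classical
  obtain ⟨σ', hσ'n, hσ'⟩ : ∃ σ' : ι → κ, σ' n = k ∧ ∀ n' ≠ n, σ' n' = σ n' :=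
    ⟨Function.update σ n k, Function.update_self .., fun n' h => Function.update_of_ne h ..⟩
  have hmin : assignmentMatrix σ ∈ hardMinimizers w D x C := h ▸ rfl
  have hne : assignmentMatrix σ' ≠ assignmentMatrix σ := fun heq => by
    have : σ n = k := by simpa [assignmentMatrix, hσ'n] using congrFun (congrFun heq k) n
    exact hk this.symm
  have hlt :
      kmeansCost w D x (assignmentMatrix σ) C < kmeansCost w D x (assignmentMatrix σ') C := by
    refine lt_of_le_of_ne (hmin.2 _ (assignmentMatrix_mem_hardAssignments σ')) fun heq => hne ?_
    have : assignmentMatrix σ' ∈ hardMinimizers w D x C :=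
      ⟨assignmentMatrix_mem_hardAssignments σ', fun Q' hQ' => heq ▸ hmin.2 Q' hQ'⟩
    rwa [h] at this
  rw [kmeansCost_assignmentMatrix, kmeansCost_assignmentMatrix] at hlt
  obtain ⟨n', -, hlt'⟩ := exists_lt_of_sum_lt hlt
  rcases eq_or_ne n' n with rfl | hn'
  · rw [hσ'n] at hlt'
    exact lt_of_mul_lt_mul_left hlt' (hw n').le
  · rw [hσ' n' hn'] at hlt'
    exact absurd hlt' (lt_irrefl _)

end HardAssignments

section Centers

variable [NormedAddCommGroup E] [NormedSpace ℝ E] {w : ι → ℝ} {x : ι → E}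

theorem kmeansCost_weightedCenter_le {s : Set E} {φ : E → ℝ} {φ' : E → E →L[ℝ] ℝ}
    (hφ : ConvexOn ℝ s φ) (hφ' : ∀ y ∈ interior s, HasFDerivAt φ (φ' y) y) (hx : ∀ n, x n ∈ s)
    {P : κ → ι → ℝ} (hP : ∀ k n, 0 ≤ P k n) (hw : ∀ n, 0 ≤ w n)
    (hpos : ∀ k, 0 < ∑ n, P k n * w n) {C : κ → E} (hC : ∀ k, C k ∈ interior s) :
    kmeansCost w (bregmanDiv φ φ') x P (weightedCenter w x P) ≤
      kmeansCost w (bregmanDiv φ φ') x P C := by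
  refine sum_le_sum fun k _ => ?_
  rw [sum_mul_bregmanDiv_centerMass univ (fun n => P k n * w n) x (hpos k).ne' (C k)]
  exact le_add_of_nonneg_right <| mul_nonneg (hpos k).le <|
    bregmanDiv_nonneg hφ (weightedCenter_mem hφ.1 hx (hP k) hw (hpos k))
      (interior_subset (hC k)) (hφ' _ (hC k))

theorem eventually_forall_apply_weightedCenter_le {D : E → E → ℝ} {P₀ : κ → ι → ℝ} {σ : ι → κ}
    (hD : ∀ n k, ContinuousAt (D (x n)) (weightedCenter w x P₀ k))
    (hpos : ∀ k, 0 < ∑ n, P₀ k n * w n)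
    (hgap : ∀ n k, k ≠ σ n →
      D (x n) (weightedCenter w x P₀ (σ n)) < D (x n) (weightedCenter w x P₀ k)) :
    ∀ᶠ P in 𝓝 P₀, ∀ n k,
      D (x n) (weightedCenter w x P (σ n)) ≤ D (x n) (weightedCenter w x P k) := by
  have hcont : ∀ n k, ContinuousAt (fun P => D (x n) (weightedCenter w x P k)) P₀ :=
    fun n k => ContinuousAt.comp (f := fun P => weightedCenter w x P k) (hD n k)
      (continuousAt_weightedCenter (hpos k).ne')
  refine eventually_all.2 fun n => eventually_all.2 fun k => ?_
  rcases eq_or_ne k (σ n) with rfl | hk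
  · exact .of_forall fun _ => le_rfl
  · exact ((hcont n (σ n)).eventually_lt (hcont n k) (hgap n k hk)).mono fun _ => le_of_lt

end Centers

end Cost

theorem partial_optimal_singleton_cLocal_general {d K N : ℕ}
    (dom : Set (Fin d → ℝ)) (hdom : Convex ℝ dom)
    (φ : (Fin d → ℝ) → ℝ) (hφ : StrictConvexOn ℝ dom φ)
    (f' : (Fin d → ℝ) → (Fin d → ℝ) →L[ℝ] ℝ)
    (hdiff : ∀ y ∈ interior dom, HasFDerivAt φ (f' y) y)
    (D : (Fin d → ℝ) → (Fin d → ℝ) → ℝ)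
    (hD : ∀ x y, D x y = φ x - φ y - f' y (x - y))
    (x : Fin N → (Fin d → ℝ)) (hx : ∀ n, x n ∈ interior dom)
    (w : Fin N → ℝ) (hw : ∀ n, 0 < w n)
    (f : (Fin K → Fin N → ℝ) → (Fin K → (Fin d → ℝ)) → ℝ)
    (hf : ∀ P C, f P C = ∑ k, ∑ n, P k n * w n * D (x n) (C k))
    (F : (Fin K → Fin N → ℝ) → ℝ)
    (hF : ∀ P, IsLeast
      {v | ∃ C : Fin K → (Fin d → ℝ), (∀ k, C k ∈ interior dom) ∧ v = f P C} (F P))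
    (S2 S1 : Set (Fin K → Fin N → ℝ))
    (hS2 : S2 = {P | (∀ n, ∑ k, P k n = 1) ∧ ∀ k n, 0 ≤ P k n})
    (hS1 : S1 = {P ∈ S2 | ∀ k n, P k n = 0 ∨ P k n = 1})
    (Pstar : Fin K → Fin N → ℝ) (hPstar : Pstar ∈ S1)
    (hnonempty : ∀ k, 0 < ∑ n, Pstar k n * w n)
    (Cstar : Fin K → (Fin d → ℝ))
    (hCstar : ∀ k, Cstar k = (∑ n, Pstar k n * w n)⁻¹ • ∑ n, (Pstar k n * w n) • x n)
    (hCint : ∀ k, Cstar k ∈ interior dom)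
    (hpartial : ∀ P ∈ S2, f Pstar Cstar ≤ f P Cstar)
    (A : Set (Fin K → Fin N → ℝ))
    (hA : A = {Q ∈ S1 | ∀ Q' ∈ S1, f Q Cstar ≤ f Q' Cstar})
    (hAsingle : ∃ Q, A = {Q}) :
    ∃ ε > 0, ∀ P ∈ S2, dist P Pstar < ε → F Pstar ≤ F P := by
  obtain rfl : D = bregmanDiv φ f' := funext₂ hD
  obtain rfl : f = kmeansCost w (bregmanDiv φ f') x := funext₂ hf
  obtain rfl : S2 = relaxedAssignments := hS2
  obtain rfl : S1 = hardAssignments := hS1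
  obtain rfl : Cstar = weightedCenter w x Pstar := funext hCstar
  obtain rfl : A = hardMinimizers w (bregmanDiv φ f') x (weightedCenter w x Pstar) := hA
  have hunique : hardMinimizers w (bregmanDiv φ f') x (weightedCenter w x Pstar) = {Pstar} :=
    (Set.exists_eq_singleton_iff_nonempty_subsingleton.1 hAsingle).2.eq_singleton_of_mem
      ⟨hPstar, fun Q hQ => hpartial Q hQ.1⟩
  obtain ⟨σ, rfl⟩ := exists_eq_assignmentMatrix hPstar
  have hstable := eventually_forall_apply_weightedCenter_le
    (fun n k => hφ.convexOn.continuousAt_bregmanDiv hdiff (x n) (hCint k)) hnonempty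
    (fun n k hk => lt_of_hardMinimizers_eq_singleton hunique hw hk)
  have hpos : ∀ᶠ P in 𝓝 (assignmentMatrix σ), ∀ k, 0 < ∑ n, P k n * w n :=
    eventually_all.2 fun k => (by fun_prop : Continuous fun P : Fin K → Fin N → ℝ =>
      ∑ n, P k n * w n).continuousAt.eventually_const_lt (hnonempty k)
  obtain ⟨ε, hε, hball⟩ := Metric.eventually_nhds_iff.1 (hstable.and hpos)
  refine ⟨ε, hε, fun P hP hdist => ?_⟩
  obtain ⟨hnearest, hPpos⟩ := hball hdist
  have hw' : ∀ n, 0 ≤ w n := fun n => (hw n).le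
  obtain ⟨C, hC, hFP⟩ := (hF P).1
  calc F (assignmentMatrix σ)
      ≤ kmeansCost w (bregmanDiv φ f') x (assignmentMatrix σ) (weightedCenter w x P) :=
        (hF _).2 ⟨_, fun k => weightedCenter_mem hdom.interior hx (hP.2 k) hw' (hPpos k), rfl⟩
    _ ≤ kmeansCost w (bregmanDiv φ f') x P (weightedCenter w x P) :=
        kmeansCost_assignmentMatrix_le hP hw' hnearest
    _ ≤ kmeansCost w (bregmanDiv φ f') x P C :=
        kmeansCost_weightedCenter_le hφ.convexOn hdiff (fun n => interior_subset (hx n)) hP.2 hw'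
          hPpos hC
    _ = F P := hFP.symm

/-- If `(P*, C*)` is a partial optimal solution of the relaxed K-means
problem (i.e. `f P* C* ≤ f P C*` for all `P ∈ S2`, with `C*` optimal for `P*`), all
clusters of `P*` are non-empty, and the set `A(C*)` of minimizing 0/1 assignments for
the centers `C*` is a singleton, then `P*` is a local minimizer of `F` on `S2`
(C-local). -/
theorem partial_optimal_singleton_cLocal {d K N : ℕ}
    (dom : Set (Fin d → ℝ)) (hdom : Convex ℝ dom)
    (φ : (Fin d → ℝ) → ℝ) (hφ : StrictConvexOn ℝ dom φ)
    (f' : (Fin d → ℝ) → (Fin d → ℝ) →L[ℝ] ℝ)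
    (hdiff : ∀ y ∈ interior dom, HasFDerivAt φ (f' y) y)
    (D : (Fin d → ℝ) → (Fin d → ℝ) → ℝ)
    (hD : ∀ x y, D x y = φ x - φ y - f' y (x - y))
    (x : Fin N → (Fin d → ℝ)) (hx : ∀ n, x n ∈ interior dom)
    (w : Fin N → ℝ) (hw : ∀ n, 0 < w n)
    (f : (Fin K → Fin N → ℝ) → (Fin K → (Fin d → ℝ)) → ℝ)
    (hf : ∀ P C, f P C = ∑ k, ∑ n, P k n * w n * D (x n) (C k))
    (F : (Fin K → Fin N → ℝ) → ℝ)
    (hF : ∀ P, IsLeast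
      {v | ∃ C : Fin K → (Fin d → ℝ), (∀ k, C k ∈ interior dom) ∧ v = f P C} (F P))
    (S2 S1 : Set (Fin K → Fin N → ℝ))
    (hS2 : S2 = {P | (∀ n, ∑ k, P k n = 1) ∧ ∀ k n, 0 ≤ P k n})
    (hS1 : S1 = {P ∈ S2 | ∀ k n, P k n = 0 ∨ P k n = 1})
    (Pstar : Fin K → Fin N → ℝ) (hPstar : Pstar ∈ S1)
    (hnonempty : ∀ k, 0 < ∑ n, Pstar k n * w n)
    (Cstar : Fin K → (Fin d → ℝ))
    (hCstar : ∀ k, Cstar k = (∑ n, Pstar k n * w n)⁻¹ • ∑ n, (Pstar k n * w n) • x n)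
    (hCint : ∀ k, Cstar k ∈ interior dom)
    (hpartial : ∀ P ∈ S2, f Pstar Cstar ≤ f P Cstar)
    (hCopt : f Pstar Cstar = F Pstar)
    (A : Set (Fin K → Fin N → ℝ))
    (hA : A = {Q ∈ S1 | ∀ Q' ∈ S1, f Q Cstar ≤ f Q' Cstar})
    (hAsingle : ∃ Q, A = {Q}) :
    ∃ ε > 0, ∀ P ∈ S2, dist P Pstar < ε → F Pstar ≤ F P :=
  partial_optimal_singleton_cLocal_general dom hdom φ hφ f' hdiff D hD x hx w hw f hf F hF S2 S1 hS2
    hS1 Pstar hPstar hnonempty Cstar hCstar hCint hpartial A hA hAsingle
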